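/- There is no n ∈ ℕ with h_{n+i} < 0 for all i = 0, 1, 2, 3, 4, 5. -/

import Mathlib

/-!
Since `t (2n) = t n` and `t (2n+1) = -t n`, the signs `t (4m + r)` for `r = 2, …, 5` are
`-t m, t m, t (m+1), -t (m+1)`. Unrolling the recursion over one block of four then gives
`h (4m+3) = t m * h (4m)`, and shows by induction on `m` that `h (4m) ≤ 0` while
`t m * h (4m+1) ≥ 1`. Hence `h (4m+1)` has the sign of `t m` and `h (4m+3)` the opposite one,
so one of them is nonnegative, and every six consecutive indices contain such a pair.
-/

def t (n : ℕ) : ℤ := (-1) ^ ((Nat.digits 2 n).sum)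

def h : ℕ → ℤ
  | 0 => 0
  | 1 => 1
  | (n + 2) => t (n + 2) * h (n + 1) + h n

lemma t_eq_one_or_eq_neg_one (n : ℕ) : t n = 1 ∨ t n = -1 :=
  neg_one_pow_eq_or ℤ _

lemma t_mul_self (n : ℕ) : t n * t n = 1 := by
  rcases t_eq_one_or_eq_neg_one n with hn | hn <;> simp [hn]

lemma t_two_mul (n : ℕ) : t (2 * n) = t n := by
  rcases Nat.eq_zero_or_pos n with rfl | hn
  · rfl
  · simp [t, Nat.digits_def' one_lt_two (by omega : 0 < 2 * n)]

lemma t_two_mul_add_one (n : ℕ) : t (2 * n + 1) = -t n := by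
  rw [t, add_comm, Nat.digits_add 2 one_lt_two 1 n one_lt_two (Or.inl one_ne_zero)]
  simp [t, pow_add]

lemma h_four_mul_add_two (m : ℕ) : h (4 * m + 2) = -t m * h (4 * m + 1) + h (4 * m) := by
  rw [h, show 4 * m + 2 = 2 * (2 * m + 1) by ring, t_two_mul, t_two_mul_add_one]

lemma h_four_mul_add_three (m : ℕ) : h (4 * m + 3) = t m * h (4 * m) := by
  have e3 : h (4 * m + 3) = t m * h (4 * m + 2) + h (4 * m + 1) := by
    rw [h, show 4 * m + 3 = 2 * (2 * m + 1) + 1 by ring, t_two_mul_add_one, t_two_mul_add_one,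
      neg_neg]
  linear_combination e3 + t m * h_four_mul_add_two m - h (4 * m + 1) * t_mul_self m

lemma h_four_mul_add_four (m : ℕ) :
    h (4 * m + 4) = (1 + t m * t (m + 1)) * h (4 * m) - t m * h (4 * m + 1) := by
  have e4 : h (4 * m + 4) = t (m + 1) * h (4 * m + 3) + h (4 * m + 2) := by
    rw [h, show 4 * m + 4 = 2 * (2 * (m + 1)) by ring, t_two_mul, t_two_mul]
  rw [e4, h_four_mul_add_two, h_four_mul_add_three]
  ring

lemma t_mul_h_four_mul_add_five (m : ℕ) :
    t (m + 1) * h (4 * m + 5) = t m * h (4 * m + 1) - h (4 * m) := by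
  have e5 : h (4 * m + 5) = -t (m + 1) * h (4 * m + 4) + h (4 * m + 3) := by
    rw [h, show 4 * m + 5 = 2 * (2 * (m + 1)) + 1 by ring, t_two_mul_add_one, t_two_mul]
  rw [e5, h_four_mul_add_four, h_four_mul_add_three]
  linear_combination (t m * h (4 * m + 1) - h (4 * m) - t (m + 1) * t m * h (4 * m)) *
    t_mul_self (m + 1)

lemma h_four_mul_nonpos_and_one_le_t_mul (m : ℕ) :
    h (4 * m) ≤ 0 ∧ 1 ≤ t m * h (4 * m + 1) := by
  induction m with
  | zero => simp [h, t]
  | succ m ih =>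
    obtain ⟨h_nonpos, one_le⟩ := ih
    have t_prod_ge : -1 ≤ t m * t (m + 1) := by
      rcases t_eq_one_or_eq_neg_one m with hm | hm <;>
        rcases t_eq_one_or_eq_neg_one (m + 1) with hm' | hm' <;> simp [hm, hm']
    refine ⟨?_, ?_⟩
    · rw [show 4 * (m + 1) = 4 * m + 4 by ring, h_four_mul_add_four]
      nlinarith
    · rw [show 4 * (m + 1) + 1 = 4 * m + 5 by ring, t_mul_h_four_mul_add_five]
      linarith

lemma h_four_mul_add_one_nonneg_or_h_four_mul_add_three_nonneg (m : ℕ) :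
    0 ≤ h (4 * m + 1) ∨ 0 ≤ h (4 * m + 3) := by
  obtain ⟨h_nonpos, one_le⟩ := h_four_mul_nonpos_and_one_le_t_mul m
  rw [h_four_mul_add_three]
  rcases t_eq_one_or_eq_neg_one m with hm | hm <;> rw [hm] at one_le ⊢
  · left; linarith
  · right; linarith

theorem stmt6 : ¬ ∃ n : ℕ, ∀ i : ℕ, i ≤ 5 → h (n + i) < 0 := by
  rintro ⟨n, hn⟩
  obtain ⟨m, hm⟩ : ∃ m, n ≤ 4 * m + 1 ∧ 4 * m + 3 ≤ n + 5 := ⟨(n + 2) / 4, by omega, by omega⟩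
  have h1 := hn (4 * m + 1 - n) (by omega)
  have h3 := hn (4 * m + 3 - n) (by omega)
  rw [Nat.add_sub_cancel' (by omega)] at h1 h3
  rcases h_four_mul_add_one_nonneg_or_h_four_mul_add_three_nonneg m with h_nonneg | h_nonneg
    <;> linarith
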